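/- arXiv:1708.00944 — 2 statements merged into one kernel-verified Lean document; each statement's English description precedes it below -/
import Mathlib

section
/- Let f = g/h ∈ 𝔽(X) in lowest terms of degree d ≥ 2 with iterates f^(k) = g_k/h_k, and let ν be the smallest positive integer k with deg g_k > deg h_k and μ the smallest such k with deg g_k < deg h_k. If ν < μ, then setting δ = deg g_ν − deg h_ν, for every integer i ≥ 1 we have deg g_{iν} = d^{iν} and deg h_{iν} = d^{iν} − δ^i, while deg g_k = deg h_k = d^k whenever k is not a multiple of ν. -/
open Polynomial

/-- Composition of rational functions: `rcomp u v = u ∘ v`. -/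
noncomputable def rcomp {F : Type*} [Field F] (u v : RatFunc F) : RatFunc F :=
  RatFunc.eval (algebraMap F (RatFunc F)) v u

/-- Iterates of a rational function: `riter f 0 = X`, `riter f (k+1) = f ∘ (riter f k)`. -/
noncomputable def riter {F : Type*} [Field F] (f : RatFunc F) : ℕ → RatFunc F
  | 0 => RatFunc.X
  | k + 1 => rcomp f (riter f k)

/-- Degree of a rational function (written in lowest terms as `num/denom`). -/
noncomputable def rdeg {F : Type*} [Field F] (f : RatFunc F) : ℕ :=
  max f.num.natDegree f.denom.natDegree

namespace StmtAux

variable {F : Type*} [Field F]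

/-- Homogenization of `w` to degree `r`, evaluated at `(p, q)`. -/
noncomputable def hmz (p q : F[X]) (r : ℕ) (w : F[X]) : F[X] :=
  ∑ i ∈ Finset.range (r + 1), Polynomial.C (w.coeff i) * p ^ i * q ^ (r - i)

lemma hmz_spec (p q w : F[X]) (hq : q ≠ 0) (r : ℕ) (hw : w.natDegree ≤ r) :
    algebraMap F[X] (RatFunc F) (hmz p q r w)
      = algebraMap F[X] (RatFunc F) q ^ r *
        Polynomial.aeval
          (algebraMap F[X] (RatFunc F) p / algebraMap F[X] (RatFunc F) q) w := by
  set φ := algebraMap F[X] (RatFunc F)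
  have hQ : φ q ≠ 0 := RatFunc.algebraMap_ne_zero hq
  rw [Polynomial.aeval_eq_sum_range' (lt_of_le_of_lt hw (Nat.lt_succ_self r)),
    Finset.mul_sum, hmz, map_sum]
  refine Finset.sum_congr rfl fun i hi => ?_
  have hir : i ≤ r := Nat.lt_succ_iff.mp (Finset.mem_range.mp hi)
  rw [map_mul, map_mul, map_pow, map_pow, RatFunc.algebraMap_C,
    Algebra.smul_def, div_pow]
  rw [show (RatFunc.C (w.coeff i) : RatFunc F) = algebraMap F (RatFunc F) (w.coeff i) from rfl]
  field_simp
  ring_nf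
  rw [mul_assoc, ← pow_add, Nat.add_sub_cancel' hir]

lemma hmz_dvd_sub_C_mul (p q w : F[X]) (r : ℕ) :
    q ∣ hmz p q r w - Polynomial.C (w.coeff r) * p ^ r := by
  rw [hmz, Finset.sum_range_succ, Nat.sub_self, pow_zero, mul_one, add_sub_cancel_right]
  refine Finset.dvd_sum fun i hi => ?_
  have : r - i = (r - i - 1) + 1 := by
    have := Finset.mem_range.mp hi; omega
  rw [this, pow_succ]
  exact ⟨Polynomial.C (w.coeff i) * p ^ i * q ^ (r - i - 1), by ring⟩

lemma hmz_dvd_sub_C_mul' (p q w : F[X]) (r : ℕ) :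
    p ∣ hmz p q r w - Polynomial.C (w.coeff 0) * q ^ r := by
  rw [hmz, Finset.sum_range_succ']
  simp only [pow_zero, mul_one, Nat.sub_zero]
  rw [add_sub_cancel_right]
  refine Finset.dvd_sum fun i hi => ?_
  exact ⟨Polynomial.C (w.coeff (i + 1)) * p ^ i * q ^ (r - (i + 1)), by ring⟩

lemma hmz_natDegree_le {p q : F[X]} (hnm : q.natDegree ≤ p.natDegree) (w : F[X]) (r : ℕ) :
    (hmz p q r w).natDegree ≤ r * p.natDegree := by
  refine le_trans (Polynomial.natDegree_sum_le _ _) ?_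
  rw [Finset.fold_max_le]
  refine ⟨Nat.zero_le _, fun i hi => ?_⟩
  have hir : i ≤ r := Nat.lt_succ_iff.mp (Finset.mem_range.mp hi)
  refine le_trans (Polynomial.natDegree_mul_le) ?_
  have h1 : (Polynomial.C (w.coeff i) * p ^ i).natDegree ≤ i * p.natDegree := by
    refine le_trans (Polynomial.natDegree_mul_le) ?_
    simp [Polynomial.natDegree_pow]
  have h2 : (q ^ (r - i)).natDegree ≤ (r - i) * q.natDegree := by
    simp [Polynomial.natDegree_pow]
  calc (Polynomial.C (w.coeff i) * p ^ i).natDegree + (q ^ (r - i)).natDegree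
      ≤ i * p.natDegree + (r - i) * q.natDegree := add_le_add h1 h2
    _ ≤ i * p.natDegree + (r - i) * p.natDegree :=
        Nat.add_le_add_left (Nat.mul_le_mul_left _ hnm) _
    _ ≤ r * p.natDegree := by
        rw [← add_mul]; exact Nat.mul_le_mul_right _ (by omega)

lemma hmz_coeff_top_gt {p q : F[X]} (hq : q ≠ 0) (hnm : q.natDegree < p.natDegree)
    (w : F[X]) (r : ℕ) :
    (hmz p q r w).coeff (r * p.natDegree) = w.coeff r * p.leadingCoeff ^ r := by
  rw [hmz, Finset.sum_range_succ, Nat.sub_self, pow_zero, mul_one]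
  rw [Polynomial.coeff_add, Polynomial.finset_sum_coeff]
  have hz : ∀ i ∈ Finset.range r,
      (Polynomial.C (w.coeff i) * p ^ i * q ^ (r - i)).coeff (r * p.natDegree) = 0 := by
    intro i hi
    have hir : i < r := Finset.mem_range.mp hi
    refine Polynomial.coeff_eq_zero_of_natDegree_lt ?_
    have hb : (Polynomial.C (w.coeff i) * p ^ i * q ^ (r - i)).natDegree
        ≤ i * p.natDegree + (r - i) * q.natDegree := by
      refine le_trans Polynomial.natDegree_mul_le (add_le_add ?_ ?_)
      · refine le_trans Polynomial.natDegree_mul_le ?_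
        simp [Polynomial.natDegree_pow]
      · simp [Polynomial.natDegree_pow]
    have h1 : (r - i) * q.natDegree < (r - i) * p.natDegree :=
      mul_lt_mul_of_pos_left hnm (by omega)
    have h3 : i * p.natDegree + (r - i) * p.natDegree = r * p.natDegree := by
      rw [← add_mul]; congr 1; omega
    omega
  rw [Finset.sum_eq_zero hz, zero_add, Polynomial.coeff_C_mul]
  congr 1
  have : (p ^ r).natDegree = r * p.natDegree := by
    rw [Polynomial.natDegree_pow]
  rw [← this, ← Polynomial.leadingCoeff, Polynomial.leadingCoeff_pow]

lemma hmz_coeff_top_eq {p q : F[X]} (hp : p ≠ 0) (hq : q.Monic)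
    (hnm : p.natDegree = q.natDegree) (w : F[X]) (r : ℕ) (hw : w.natDegree ≤ r) :
    (hmz p q r w).coeff (r * p.natDegree) = w.eval p.leadingCoeff := by
  rw [hmz, Polynomial.finset_sum_coeff,
    Polynomial.eval_eq_sum_range' (lt_of_le_of_lt hw (Nat.lt_succ_self r))]
  refine Finset.sum_congr rfl fun i hi => ?_
  have hir : i ≤ r := Nat.lt_succ_iff.mp (Finset.mem_range.mp hi)
  rw [mul_assoc, Polynomial.coeff_C_mul]
  congr 1
  have hdeg : (p ^ i * q ^ (r - i)).natDegree = r * p.natDegree := by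
    rw [Polynomial.natDegree_mul (pow_ne_zero _ hp) (pow_ne_zero _ hq.ne_zero),
      Polynomial.natDegree_pow, Polynomial.natDegree_pow, ← hnm, ← add_mul]
    congr 1; omega
  rw [← hdeg, ← Polynomial.leadingCoeff, Polynomial.leadingCoeff_mul,
    Polynomial.leadingCoeff_pow, Polynomial.leadingCoeff_pow, hq.leadingCoeff,
    one_pow, mul_one]

lemma hmz_ne_zero {p q : F[X]} (hcop : IsCoprime p q) (hq : q ≠ 0)
    (hp1 : 1 ≤ p.natDegree) :
    ∀ r (w : F[X]), w ≠ 0 → w.natDegree ≤ r → hmz p q r w ≠ 0 := by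
  have hp : p ≠ 0 := fun h => by simp [h] at hp1
  have hpu : ¬IsUnit p := Polynomial.not_isUnit_of_natDegree_pos p (by omega)
  obtain ⟨z, hzirr, hzp⟩ := WfDvdMonoid.exists_irreducible_factor hpu hp
  have hzprime : Prime z := hzirr.prime
  intro r
  induction r using Nat.strong_induction_on with
  | _ r ih =>
    intro w hw hwr hcontra
    by_cases h0 : w.coeff 0 = 0
    · -- w = X * w'
      obtain ⟨w', hw'⟩ := Polynomial.X_dvd_iff.mpr h0
      have hw'0 : w' ≠ 0 := fun h => hw (by simp [hw', h])
      rcases Nat.eq_zero_or_pos r with hr0 | hr0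
      · subst hr0
        have : w.natDegree = 0 := Nat.le_zero.mp hwr
        have := Polynomial.eq_C_of_natDegree_eq_zero this
        rw [this, h0] at hw
        simp at hw
      · -- hmz p q r (X * w') = p * hmz p q (r-1) w'
        have hdegw : w.natDegree = w'.natDegree + 1 := by
          rw [hw', Polynomial.natDegree_mul Polynomial.X_ne_zero hw'0,
            Polynomial.natDegree_X]
          omega
        have hw'r : w'.natDegree ≤ r - 1 := by omega
        have key : hmz p q r w = p * hmz p q (r - 1) w' := by
          apply RatFunc.algebraMap_injective F
          rw [map_mul, hmz_spec p q w hq r hwr,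
            hmz_spec p q w' hq (r - 1) hw'r, hw', map_mul]
          set φ := algebraMap F[X] (RatFunc F)
          have hQ : φ q ≠ 0 := RatFunc.algebraMap_ne_zero hq
          rw [Polynomial.aeval_X]
          have : (φ q) ^ r = φ q ^ (r - 1) * φ q := by
            rw [← pow_succ]; congr 1; omega
          rw [this]
          field_simp
        rw [key] at hcontra
        rcases mul_eq_zero.mp hcontra with h | h
        · exact hp h
        · exact ih (r - 1) (by omega) w' hw'0 hw'r h
    · -- constant coefficient nonzero
      have hdvd : p ∣ Polynomial.C (w.coeff 0) * q ^ r := by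
        have := hmz_dvd_sub_C_mul' p q w r
        rw [hcontra, zero_sub, dvd_neg] at this
        exact this
      have hzc : z ∣ Polynomial.C (w.coeff 0) * q ^ r := hzp.trans hdvd
      have hCu : IsUnit (Polynomial.C (w.coeff 0)) :=
        Polynomial.isUnit_C.mpr (isUnit_iff_ne_zero.mpr h0)
      have hzq : z ∣ q ^ r := by
        rcases hzprime.dvd_mul.mp hzc with h | h
        · exact absurd (isUnit_of_dvd_unit h hCu) hzirr.not_isUnit
        · exact h
      rcases Nat.eq_zero_or_pos r with hr0 | hr0
      · subst hr0
        simp only [pow_zero] at hzq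
        exact hzirr.not_isUnit (isUnit_of_dvd_unit hzq isUnit_one)
      · have : z ∣ q := hzprime.dvd_of_dvd_pow hzq
        exact hzirr.not_isUnit (hcop.isUnit_of_dvd' hzp this)

/-- A nonconstant-numerator rational function is "transcendental": no nonzero
polynomial evaluates to zero on it. -/
lemma aeval_ne_zero (v : RatFunc F) (hv1 : 1 ≤ v.num.natDegree)
    {w : F[X]} (hw : w ≠ 0) : Polynomial.aeval v w ≠ 0 := by
  intro hcontra
  have hspec := hmz_spec v.num v.denom w v.denom_ne_zero w.natDegree (le_refl _)
  rw [RatFunc.num_div_denom, hcontra, mul_zero] at hspec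
  have := hmz_ne_zero (RatFunc.isCoprime_num_denom v) v.denom_ne_zero hv1
    w.natDegree w hw (le_refl _)
  exact this (RatFunc.algebraMap_injective F (by rw [hspec, map_zero]))

lemma rcomp_eq_div (u v : RatFunc F) :
    rcomp u v = Polynomial.aeval v u.num / Polynomial.aeval v u.denom := by
  simp only [rcomp, RatFunc.eval, Polynomial.aeval_def]

lemma rcomp_X_right (u : RatFunc F) : rcomp u RatFunc.X = u := by
  rw [rcomp_eq_div]
  have h : ∀ w : F[X], Polynomial.aeval (RatFunc.X : RatFunc F) w
      = algebraMap F[X] (RatFunc F) w := by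
    intro w
    rw [← RatFunc.algebraMap_X, Polynomial.aeval_algebraMap_apply]
    simp
  rw [h, h, RatFunc.num_div_denom]

lemma rcomp_X_left (v : RatFunc F) : rcomp RatFunc.X v = v := by
  rw [rcomp_eq_div, RatFunc.num_X, RatFunc.denom_X]
  simp

/-- The field homomorphism `u ↦ u ∘ v` for `v` with nonconstant numerator. -/
lemma exists_comp_hom (v : RatFunc F) (hv1 : 1 ≤ v.num.natDegree) :
    ∃ Ψ : RatFunc F →+* RatFunc F,
      (∀ w : F[X], Ψ (algebraMap F[X] (RatFunc F) w) = Polynomial.aeval v w) ∧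
      (∀ u, rcomp u v = Ψ u) := by
  have hinj : Function.Injective ((Polynomial.aeval v).toRingHom : F[X] →+* RatFunc F) := by
    rw [injective_iff_map_eq_zero]
    intro w hw
    by_contra h
    exact aeval_ne_zero v hv1 h hw
  refine ⟨IsFractionRing.lift hinj, ?_, ?_⟩
  · intro w; exact IsFractionRing.lift_algebraMap hinj w
  · intro u
    rw [rcomp_eq_div]
    conv_rhs => rw [← RatFunc.num_div_denom u]
    rw [map_div₀, IsFractionRing.lift_algebraMap hinj, IsFractionRing.lift_algebraMap hinj]
    rfl

lemma rcomp_assoc (u w v : RatFunc F) (hv1 : 1 ≤ v.num.natDegree)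
    (hwv1 : 1 ≤ (rcomp w v).num.natDegree) :
    rcomp u (rcomp w v) = rcomp (rcomp u w) v := by
  obtain ⟨Ψv, hΨv1, hΨv2⟩ := exists_comp_hom v hv1
  obtain ⟨Ψs, hΨs1, hΨs2⟩ := exists_comp_hom (rcomp w v) hwv1
  have hagree : ∀ y : F[X], Polynomial.aeval (rcomp w v) y
      = Ψv (Polynomial.aeval w y) := by
    have hhoms : ((Polynomial.aeval (rcomp w v)).toRingHom : F[X] →+* RatFunc F)
        = Ψv.comp ((Polynomial.aeval w).toRingHom : F[X] →+* RatFunc F) := by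
      apply Polynomial.ringHom_ext
      · intro a
        simp only [AlgHom.toRingHom_eq_coe, RingHom.coe_coe, Polynomial.aeval_C,
          RingHom.coe_comp, Function.comp_apply]
        rw [show (algebraMap F (RatFunc F)) a
            = algebraMap F[X] (RatFunc F) (Polynomial.C a) by
          rw [RatFunc.algebraMap_C]; rfl]
        rw [hΨv1]
        simp
      · simp only [AlgHom.toRingHom_eq_coe, RingHom.coe_coe, Polynomial.aeval_X,
          RingHom.coe_comp, Function.comp_apply]
        exact hΨv2 w
    intro y
    have := congrFun (congrArg (fun (f : F[X] →+* RatFunc F) => (f : F[X] → RatFunc F)) hhoms) y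
    simpa using this
  rw [rcomp_eq_div u (rcomp w v), hagree, hagree, ← map_div₀,
    ← rcomp_eq_div, hΨv2]

/-- Identification of `num` and `denom` degrees from a coprime representation. -/
lemma num_denom_natDegree_eq (x : RatFunc F) (N D : F[X]) (hN : N ≠ 0) (hD : D ≠ 0)
    (hcop : IsCoprime N D)
    (hx : x = algebraMap F[X] (RatFunc F) N / algebraMap F[X] (RatFunc F) D) :
    x.num.natDegree = N.natDegree ∧ x.denom.natDegree = D.natDegree := by
  have hx0 : x ≠ 0 := by
    rw [hx]
    exact div_ne_zero (RatFunc.algebraMap_ne_zero hN) (RatFunc.algebraMap_ne_zero hD)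
  have hnum0 : x.num ≠ 0 := RatFunc.num_ne_zero hx0
  have hcross : x.num * D = N * x.denom := by
    apply RatFunc.algebraMap_injective F
    rw [map_mul, map_mul]
    rw [← div_eq_div_iff (RatFunc.algebraMap_ne_zero x.denom_ne_zero)
      (RatFunc.algebraMap_ne_zero hD), RatFunc.num_div_denom, hx]
  have hdvd1 : x.num ∣ N := by
    refine (RatFunc.isCoprime_num_denom x).dvd_of_dvd_mul_right ?_
    exact ⟨D, by rw [← hcross]⟩
  have hdvd2 : N ∣ x.num := by
    refine hcop.dvd_of_dvd_mul_right ?_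
    exact ⟨x.denom, hcross⟩
  have hdvd3 : x.denom ∣ D := by
    refine ((RatFunc.isCoprime_num_denom x).symm).dvd_of_dvd_mul_right ?_
    exact ⟨N, by linear_combination hcross⟩
  have hdvd4 : D ∣ x.denom := by
    refine (hcop.symm).dvd_of_dvd_mul_right ?_
    exact ⟨x.num, by linear_combination -hcross⟩
  constructor
  · exact le_antisymm (Polynomial.natDegree_le_of_dvd hdvd1 hN)
      (Polynomial.natDegree_le_of_dvd hdvd2 hnum0)
  · exact le_antisymm (Polynomial.natDegree_le_of_dvd hdvd3 hD)
      (Polynomial.natDegree_le_of_dvd hdvd4 x.denom_ne_zero)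


lemma hmz_bezout (p : F[X]) {q : F[X]} (hq : q ≠ 0) {g h c e : F[X]}
    (hbez : c * g + e * h = 1) :
    hmz p q (max (c.natDegree + g.natDegree) (e.natDegree + h.natDegree) - g.natDegree) c *
        hmz p q g.natDegree g +
      hmz p q (max (c.natDegree + g.natDegree) (e.natDegree + h.natDegree) - h.natDegree) e *
        hmz p q h.natDegree h
    = q ^ max (c.natDegree + g.natDegree) (e.natDegree + h.natDegree) := by
  set M := max (c.natDegree + g.natDegree) (e.natDegree + h.natDegree) with hM
  have ha : g.natDegree ≤ M := le_trans (Nat.le_add_left _ _) (le_max_left _ _)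
  have hb : h.natDegree ≤ M := le_trans (Nat.le_add_left _ _) (le_max_right _ _)
  have hca : c.natDegree ≤ M - g.natDegree := Nat.le_sub_of_add_le (le_max_left _ _)
  have hea : e.natDegree ≤ M - h.natDegree := Nat.le_sub_of_add_le (le_max_right _ _)
  apply RatFunc.algebraMap_injective F
  set t := algebraMap F[X] (RatFunc F) p / algebraMap F[X] (RatFunc F) q with ht
  rw [map_add, map_mul, map_mul, map_pow,
    hmz_spec p q c hq _ hca, hmz_spec p q g hq _ (le_refl _),
    hmz_spec p q e hq _ hea, hmz_spec p q h hq _ (le_refl _)]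
  set Q := algebraMap F[X] (RatFunc F) q with hQdef
  have h1 : Polynomial.aeval t c * Polynomial.aeval t g
      + Polynomial.aeval t e * Polynomial.aeval t h = 1 := by
    rw [← map_mul, ← map_mul, ← map_add, hbez, map_one]
  have e1 : Q ^ (M - g.natDegree) * Q ^ g.natDegree = Q ^ M := by
    rw [← pow_add, Nat.sub_add_cancel ha]
  have e2 : Q ^ (M - h.natDegree) * Q ^ h.natDegree = Q ^ M := by
    rw [← pow_add, Nat.sub_add_cancel hb]
  calc Q ^ (M - g.natDegree) * Polynomial.aeval t c *
        (Q ^ g.natDegree * Polynomial.aeval t g)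
      + Q ^ (M - h.natDegree) * Polynomial.aeval t e *
        (Q ^ h.natDegree * Polynomial.aeval t h)
      = Q ^ (M - g.natDegree) * Q ^ g.natDegree *
          (Polynomial.aeval t c * Polynomial.aeval t g)
        + Q ^ (M - h.natDegree) * Q ^ h.natDegree *
          (Polynomial.aeval t e * Polynomial.aeval t h) := by ring
    _ = Q ^ M * (Polynomial.aeval t c * Polynomial.aeval t g
        + Polynomial.aeval t e * Polynomial.aeval t h) := by rw [e1, e2]; ring
    _ = Q ^ M := by rw [h1, mul_one]

lemma hmz_G_ne_zero {u v : RatFunc F} (hu : u ≠ 0) (hv1 : 1 ≤ v.num.natDegree) :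
    hmz v.num v.denom u.num.natDegree u.num ≠ 0 ∧
    hmz v.num v.denom u.denom.natDegree u.denom ≠ 0 :=
  ⟨hmz_ne_zero (RatFunc.isCoprime_num_denom v) v.denom_ne_zero hv1 _ _
      (RatFunc.num_ne_zero hu) (le_refl _),
   hmz_ne_zero (RatFunc.isCoprime_num_denom v) v.denom_ne_zero hv1 _ _
      u.denom_ne_zero (le_refl _)⟩

lemma hmz_isCoprime {u v : RatFunc F} (hu : u ≠ 0) (hv1 : 1 ≤ v.num.natDegree) :
    IsCoprime
      (v.denom ^ (rdeg u - u.num.natDegree) * hmz v.num v.denom u.num.natDegree u.num)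
      (v.denom ^ (rdeg u - u.denom.natDegree) *
        hmz v.num v.denom u.denom.natDegree u.denom) := by
  set p := v.num with hp'
  set q := v.denom with hq'
  set g := u.num with hg'
  set h := u.denom with hh'
  have hq : q ≠ 0 := v.denom_ne_zero
  have hp : p ≠ 0 := fun h0 => by simp [h0] at hv1
  have hcpq : IsCoprime p q := RatFunc.isCoprime_num_denom v
  have hg : g ≠ 0 := RatFunc.num_ne_zero hu
  have hh : h ≠ 0 := u.denom_ne_zero
  obtain ⟨hG, hH⟩ := hmz_G_ne_zero hu hv1
  have hN : q ^ (rdeg u - g.natDegree) * hmz p q g.natDegree g ≠ 0 :=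
    mul_ne_zero (pow_ne_zero _ hq) hG
  obtain ⟨c, e, hce⟩ := RatFunc.isCoprime_num_denom u
  have hbez := hmz_bezout p hq hce
  refine isCoprime_of_prime_dvd (fun ⟨h1, _⟩ => hN h1) ?_
  intro z hz hzN hzD
  by_cases hzq : z ∣ q
  · have key : ∀ w : F[X], w ≠ 0 → z ∣ hmz p q w.natDegree w →
        z ∣ Polynomial.C w.leadingCoeff * p ^ w.natDegree := by
      intro w hw hzw
      have := hmz_dvd_sub_C_mul p q w w.natDegree
      have h2 : z ∣ hmz p q w.natDegree w -
          Polynomial.C (w.coeff w.natDegree) * p ^ w.natDegree := hzq.trans this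
      have := dvd_sub hzw h2
      rwa [sub_sub_cancel, Polynomial.coeff_natDegree] at this
    have hdvdp : ∀ w : F[X], w ≠ 0 → z ∣ hmz p q w.natDegree w → False := by
      intro w hw hzw
      have h3 := key w hw hzw
      have hCu : IsUnit (Polynomial.C w.leadingCoeff) :=
        Polynomial.isUnit_C.mpr
          (isUnit_iff_ne_zero.mpr (Polynomial.leadingCoeff_ne_zero.mpr hw))
      have hzp : z ∣ p ^ w.natDegree := by
        rcases hz.dvd_mul.mp h3 with h4 | h4
        · exact absurd (isUnit_of_dvd_unit h4 hCu) hz.not_unit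
        · exact h4
      rcases Nat.eq_zero_or_pos w.natDegree with h5 | h5
      · rw [h5, pow_zero] at hzp
        exact hz.not_unit (isUnit_of_dvd_unit hzp isUnit_one)
      · exact hz.not_unit (hcpq.isUnit_of_dvd' (hz.dvd_of_dvd_pow hzp) hzq)
    rcases le_total h.natDegree g.natDegree with hba | hab
    · have hD : rdeg u - g.natDegree = 0 := by
        simp only [rdeg, ← hg', ← hh']
        omega
      rw [hD, pow_zero, one_mul] at hzN
      exact hdvdp g hg hzN
    · have hD : rdeg u - h.natDegree = 0 := by
        simp only [rdeg, ← hg', ← hh']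
        omega
      rw [hD, pow_zero, one_mul] at hzD
      exact hdvdp h hh hzD
  · have hzG : z ∣ hmz p q g.natDegree g := by
      rcases hz.dvd_mul.mp hzN with h4 | h4
      · exact absurd (hz.dvd_of_dvd_pow h4) hzq
      · exact h4
    have hzH : z ∣ hmz p q h.natDegree h := by
      rcases hz.dvd_mul.mp hzD with h4 | h4
      · exact absurd (hz.dvd_of_dvd_pow h4) hzq
      · exact h4
    have : z ∣ q ^ max (c.natDegree + g.natDegree) (e.natDegree + h.natDegree) := by
      rw [← hbez]
      exact dvd_add (dvd_mul_of_dvd_right hzG _) (dvd_mul_of_dvd_right hzH _)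
    exact hzq (hz.dvd_of_dvd_pow this)

lemma rcomp_rep {u v : RatFunc F} (hu : u ≠ 0) (hv1 : 1 ≤ v.num.natDegree) :
    (rcomp u v).num.natDegree
      = (rdeg u - u.num.natDegree) * v.denom.natDegree
        + (hmz v.num v.denom u.num.natDegree u.num).natDegree ∧
    (rcomp u v).denom.natDegree
      = (rdeg u - u.denom.natDegree) * v.denom.natDegree
        + (hmz v.num v.denom u.denom.natDegree u.denom).natDegree := by
  set p := v.num with hp'
  set q := v.denom with hq'
  set g := u.num with hg'
  set h := u.denom with hh'
  set G := hmz p q g.natDegree g with hG'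
  set H := hmz p q h.natDegree h with hH'
  set D := rdeg u with hD'
  have hq : q ≠ 0 := v.denom_ne_zero
  have hg : g ≠ 0 := RatFunc.num_ne_zero hu
  have hh : h ≠ 0 := u.denom_ne_zero
  obtain ⟨hG, hH⟩ := hmz_G_ne_zero hu hv1
  set φ := algebraMap F[X] (RatFunc F) with hφ
  have hQ : φ q ≠ 0 := RatFunc.algebraMap_ne_zero hq
  have haD : g.natDegree ≤ D := le_max_left _ _
  have hbD : h.natDegree ≤ D := le_max_right _ _
  have hGspec := hmz_spec p q g hq g.natDegree (le_refl _)
  have hHspec := hmz_spec p q h hq h.natDegree (le_refl _)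
  rw [RatFunc.num_div_denom] at hGspec hHspec
  have hgval : Polynomial.aeval v g = φ G / φ q ^ g.natDegree := by
    rw [eq_div_iff (pow_ne_zero _ hQ), hG', hφ, hGspec]; ring
  have hhval : Polynomial.aeval v h = φ H / φ q ^ h.natDegree := by
    rw [eq_div_iff (pow_ne_zero _ hQ), hH', hφ, hHspec]; ring
  have keyfr : ∀ (A : RatFunc F) (a : ℕ), a ≤ D →
      A / φ q ^ a = φ q ^ (D - a) * A / φ q ^ D := by
    intro A a ha
    rw [div_eq_div_iff (pow_ne_zero _ hQ) (pow_ne_zero _ hQ),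
      show (φ q) ^ D = φ q ^ (D - a) * φ q ^ a by rw [← pow_add, Nat.sub_add_cancel ha]]
    ring
  have hrep : rcomp u v = φ (q ^ (D - g.natDegree) * G) / φ (q ^ (D - h.natDegree) * H) := by
    rw [rcomp_eq_div, ← hg', ← hh', hgval, hhval, keyfr _ _ haD, keyfr _ _ hbD,
      div_div_div_comm, div_self (pow_ne_zero _ hQ), div_one, map_mul, map_mul,
      map_pow, map_pow]
  obtain ⟨e1, e2⟩ := num_denom_natDegree_eq (rcomp u v) _ _
    (mul_ne_zero (pow_ne_zero _ hq) hG) (mul_ne_zero (pow_ne_zero _ hq) hH)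
    (hmz_isCoprime hu hv1) hrep
  constructor
  · rw [e1, Polynomial.natDegree_mul (pow_ne_zero _ hq) hG, Polynomial.natDegree_pow]
  · rw [e2, Polynomial.natDegree_mul (pow_ne_zero _ hq) hH, Polynomial.natDegree_pow]

lemma hmz_natDegree_gt {p q : F[X]} (hq : q ≠ 0) (hp : p ≠ 0)
    (hnm : q.natDegree < p.natDegree) {w : F[X]} (hw : w ≠ 0) :
    (hmz p q w.natDegree w).natDegree = w.natDegree * p.natDegree := by
  refine le_antisymm (hmz_natDegree_le (le_of_lt hnm) _ _) ?_
  refine Polynomial.le_natDegree_of_ne_zero ?_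
  rw [hmz_coeff_top_gt hq hnm, Polynomial.coeff_natDegree]
  exact mul_ne_zero (Polynomial.leadingCoeff_ne_zero.mpr hw)
    (pow_ne_zero _ (Polynomial.leadingCoeff_ne_zero.mpr hp))

lemma comp_deg_gt {u v : RatFunc F} (hu : u ≠ 0)
    (hmn : v.denom.natDegree < v.num.natDegree) :
    (rcomp u v).num.natDegree
      = (rdeg u - u.num.natDegree) * v.denom.natDegree
        + u.num.natDegree * v.num.natDegree ∧
    (rcomp u v).denom.natDegree
      = (rdeg u - u.denom.natDegree) * v.denom.natDegree
        + u.denom.natDegree * v.num.natDegree := by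
  have hv1 : 1 ≤ v.num.natDegree := by omega
  have hp : v.num ≠ 0 := fun h0 => by simp [h0] at hv1
  obtain ⟨e1, e2⟩ := rcomp_rep hu hv1
  rw [hmz_natDegree_gt v.denom_ne_zero hp hmn (RatFunc.num_ne_zero hu)] at e1
  rw [hmz_natDegree_gt v.denom_ne_zero hp hmn u.denom_ne_zero] at e2
  exact ⟨e1, e2⟩

lemma comp_rdeg_eq {u v : RatFunc F} (hu : u ≠ 0) (hv1 : 1 ≤ v.num.natDegree)
    (hmn : v.num.natDegree = v.denom.natDegree) :
    rdeg (rcomp u v) = rdeg u * rdeg v := by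
  set p := v.num with hp'
  set q := v.denom with hq'
  set g := u.num with hg'
  set h := u.denom with hh'
  set D := rdeg u with hD'
  have hq : q ≠ 0 := v.denom_ne_zero
  have hp : p ≠ 0 := fun h0 => by simp [h0] at hv1
  set m := p.natDegree with hm'
  have hg : g ≠ 0 := RatFunc.num_ne_zero hu
  have hh : h ≠ 0 := u.denom_ne_zero
  have haD : g.natDegree ≤ D := le_max_left _ _
  have hbD : h.natDegree ≤ D := le_max_right _ _
  obtain ⟨hG0, hH0⟩ := hmz_G_ne_zero hu hv1
  obtain ⟨e1, e2⟩ := rcomp_rep hu hv1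
  have hnm : q.natDegree ≤ m := le_of_eq hmn.symm
  have hGle : (hmz p q g.natDegree g).natDegree ≤ g.natDegree * m :=
    hmz_natDegree_le hnm _ _
  have hHle : (hmz p q h.natDegree h).natDegree ≤ h.natDegree * m :=
    hmz_natDegree_le hnm _ _
  have hup1 : (rcomp u v).num.natDegree ≤ D * m := by
    rw [e1, ← hmn]
    calc (D - g.natDegree) * m + (hmz p q g.natDegree g).natDegree
        ≤ (D - g.natDegree) * m + g.natDegree * m := by omega
      _ = D * m := by rw [← add_mul, Nat.sub_add_cancel haD]
  have hup2 : (rcomp u v).denom.natDegree ≤ D * m := by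
    rw [e2, ← hmn]
    calc (D - h.natDegree) * m + (hmz p q h.natDegree h).natDegree
        ≤ (D - h.natDegree) * m + h.natDegree * m := by omega
      _ = D * m := by rw [← add_mul, Nat.sub_add_cancel hbD]
  have hlam : g.eval p.leadingCoeff ≠ 0 ∨ h.eval p.leadingCoeff ≠ 0 := by
    by_contra hcon
    push_neg at hcon
    obtain ⟨hc1, hc2⟩ := hcon
    have := (RatFunc.isCoprime_num_denom u).map (Polynomial.evalRingHom p.leadingCoeff)
    simp only [Polynomial.coe_evalRingHom, ← hg', ← hh', hc1, hc2] at this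
    exact not_isUnit_zero (isCoprime_zero_left.mp this)
  have hmono : q.Monic := RatFunc.monic_denom v
  have hlow : D * m ≤ max (rcomp u v).num.natDegree (rcomp u v).denom.natDegree := by
    rcases hlam with hc | hc
    · refine le_max_of_le_left ?_
      have hGeq : (hmz p q g.natDegree g).natDegree = g.natDegree * m := by
        refine le_antisymm hGle (Polynomial.le_natDegree_of_ne_zero ?_)
        rw [hmz_coeff_top_eq hp hmono hmn g g.natDegree (le_refl _)]
        exact hc
      rw [e1, hGeq, ← hmn]
      rw [← add_mul, Nat.sub_add_cancel haD]
    · refine le_max_of_le_right ?_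
      have hHeq : (hmz p q h.natDegree h).natDegree = h.natDegree * m := by
        refine le_antisymm hHle (Polynomial.le_natDegree_of_ne_zero ?_)
        rw [hmz_coeff_top_eq hp hmono hmn h h.natDegree (le_refl _)]
        exact hc
      rw [e2, hHeq, ← hmn]
      rw [← add_mul, Nat.sub_add_cancel hbD]
  have hrv : rdeg v = m := by
    simp only [rdeg, ← hp', ← hq', ← hm', ← hmn, max_self]
  rw [hrv]
  simp only [rdeg]
  exact le_antisymm (max_le hup1 hup2) hlow

end StmtAux

theorem stmt5 {F : Type*} [Field F] (f : RatFunc F) (d : ℕ) (hd : rdeg f = d) (hd2 : 2 ≤ d)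
    (ν : ℕ) (hν0 : 0 < ν)
    (hν : (riter f ν).denom.natDegree < (riter f ν).num.natDegree)
    (hbefore : ∀ k, 0 < k → k < ν →
      (riter f k).num.natDegree = (riter f k).denom.natDegree)
    (δ : ℕ) (hδ : δ = (riter f ν).num.natDegree - (riter f ν).denom.natDegree) :
    (∀ i : ℕ, 1 ≤ i →
        (riter f (i * ν)).num.natDegree = d ^ (i * ν) ∧
        (riter f (i * ν)).denom.natDegree = d ^ (i * ν) - δ ^ i) ∧
    (∀ k : ℕ, 0 < k → ¬ ν ∣ k →
        (riter f k).num.natDegree = d ^ k ∧ (riter f k).denom.natDegree = d ^ k) := by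
  classical
  have hf0 : f ≠ 0 := by
    intro h0
    rw [h0] at hd
    simp [rdeg, RatFunc.num_zero, RatFunc.denom_zero] at hd
    omega
  have h1 : riter f 1 = f := by
    show rcomp f (riter f 0) = f
    rw [show riter f 0 = RatFunc.X from rfl, StmtAux.rcomp_X_right]
  have hν1 : 1 ≤ (riter f ν).num.natDegree := by omega
  have key : ∀ k, 1 ≤ k →
      (riter f k).num.natDegree = d ^ k ∧
      (riter f k).denom.natDegree = d ^ k - (if ν ∣ k then δ ^ (k / ν) else 0) := by
    intro k
    induction k using Nat.strong_induction_on with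
    | _ k ih =>
      intro hk1
      by_cases hkν : k ≤ ν
      · -- degrees multiply up to ν
        have hr : rdeg (riter f k) = d ^ k := by
          rcases Nat.lt_or_ge k 2 with h2 | h2
          · have e : k = 1 := by omega
            rw [e, h1, pow_one]; exact hd
          · obtain ⟨haj, hbj⟩ := ih (k - 1) (by omega) (by omega)
            have hnd : ¬ ν ∣ (k - 1) := fun hdvd => by
              have := Nat.le_of_dvd (by omega) hdvd; omega
            rw [if_neg hnd, Nat.sub_zero] at hbj
            have hv1 : 1 ≤ (riter f (k - 1)).num.natDegree := by
              rw [haj]; exact Nat.one_le_pow _ _ (by omega)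
            have hmn : (riter f (k - 1)).num.natDegree
                = (riter f (k - 1)).denom.natDegree := by rw [haj, hbj]
            have hstep : riter f k = rcomp f (riter f (k - 1)) := by
              conv_lhs => rw [show k = (k - 1) + 1 by omega]
              rfl
            rw [hstep, StmtAux.comp_rdeg_eq hf0 hv1 hmn, hd]
            have : rdeg (riter f (k - 1)) = d ^ (k - 1) := by
              simp only [rdeg, haj, hbj, max_self]
            rw [this, ← pow_succ']
            congr 1
            omega
        rcases eq_or_lt_of_le hkν with heq | hlt
        · -- k = ν
          subst heq
          have hak : (riter f k).num.natDegree = d ^ k := by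
            have := hr
            simp only [rdeg] at this
            rw [max_eq_left (le_of_lt hν)] at this
            exact this
          refine ⟨hak, ?_⟩
          rw [if_pos (dvd_refl k), Nat.div_self hν0, pow_one]
          omega
        · -- k < ν
          have hab := hbefore k (by omega) hlt
          have hnd : ¬ ν ∣ k := fun hdvd => by
            have := Nat.le_of_dvd (by omega) hdvd; omega
          simp only [rdeg, hab, max_self] at hr
          exact ⟨by rw [hab]; exact hr, by rw [if_neg hnd]; omega⟩
      · -- k > ν : use the semigroup law with step ν
        push_neg at hkν
        set j := k - ν with hj'
        have hjk : j < k := by omega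
        have hj1 : 1 ≤ j := by omega
        obtain ⟨haj, hbj⟩ := ih j hjk hj1
        obtain ⟨haν, hbν⟩ := ih ν (by omega) (by omega)
        rw [if_pos (dvd_refl ν), Nat.div_self hν0, pow_one] at hbν
        have hδd : δ ≤ d ^ ν := by omega
        have hdpow : ∀ l : ℕ, (1:ℕ) ≤ d ^ l := fun l => Nat.one_le_pow _ _ (by omega)
        -- semigroup law
        have hsg : ∀ l, 1 ≤ l → l + ν ≤ k → riter f (l + ν) = rcomp (riter f l) (riter f ν) := by
          intro l
          induction l with
          | zero => intro h; omega
          | succ l ihl =>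
            intro _ hlk
            rcases Nat.eq_zero_or_pos l with rfl | hl
            · rw [show (0:ℕ) + 1 = 1 from rfl, show 1 + ν = ν + 1 by omega, h1]
              rfl
            · have hrec := ihl (by omega) (by omega)
              rw [show l + 1 + ν = (l + ν) + 1 by omega]
              have e2 : riter f ((l + ν) + 1) = rcomp f (riter f (l + ν)) := rfl
              rw [e2, hrec]
              have hwv1 : 1 ≤ (rcomp (riter f l) (riter f ν)).num.natDegree := by
                rw [← hrec]
                have := (ih (l + ν) (by omega) (by omega)).1
                rw [this]
                exact hdpow _
              rw [StmtAux.rcomp_assoc f (riter f l) (riter f ν) hν1 hwv1]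
              rfl
        have hsemi : riter f k = rcomp (riter f j) (riter f ν) := by
          conv_lhs => rw [show k = j + ν by omega]
          exact hsg j hj1 (by omega)
        have hu : riter f j ≠ 0 := by
          intro h0
          rw [h0, RatFunc.num_zero] at haj
          simp only [Polynomial.natDegree_zero] at haj
          have := hdpow j
          omega
        obtain ⟨hA, hB⟩ := StmtAux.comp_deg_gt hu hν
        rw [← hsemi] at hA hB
        have hDj : rdeg (riter f j) = d ^ j := by
          simp only [rdeg, haj, hbj]
          exact max_eq_left (Nat.sub_le _ _)
        rw [hDj, haj, haν, hbν] at hA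
        rw [hDj, hbj, haν, hbν] at hB
        constructor
        · rw [hA, Nat.sub_self, zero_mul, zero_add, ← pow_add]
          congr 1
          omega
        · rw [hB]
          set x := (if ν ∣ j then δ ^ (j / ν) else 0) with hx'
          have hxd : x ≤ d ^ j := by
            rw [hx']
            split
            · calc δ ^ (j / ν) ≤ (d ^ ν) ^ (j / ν) := Nat.pow_le_pow_left hδd _
                _ = d ^ (ν * (j / ν)) := by rw [← pow_mul]
                _ ≤ d ^ j := Nat.pow_le_pow_right (by omega)
                    (by rw [mul_comm]; exact Nat.div_mul_le_self j ν)
            · exact Nat.zero_le _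
          have hEk : (if ν ∣ k then δ ^ (k / ν) else 0) = x * δ := by
            rw [hx']
            have hiff : ν ∣ k ↔ ν ∣ j := by
              constructor
              · intro hdvd
                have h8 : ν ∣ k - ν := Nat.dvd_sub hdvd (dvd_refl ν)
                rwa [show k - ν = j by omega] at h8
              · intro hdvd
                rw [show k = j + ν by omega]
                exact dvd_add hdvd (dvd_refl ν)
            by_cases hd1 : ν ∣ j
            · rw [if_pos (hiff.mpr hd1), if_pos hd1,
                show k / ν = j / ν + 1 by rw [show k = j + ν by omega]; exact Nat.add_div_right j hν0,
                pow_succ]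
            · rw [if_neg (fun h => hd1 (hiff.mp h)), if_neg hd1, zero_mul]
          rw [hEk]
          have hsub1 : d ^ j - (d ^ j - x) = x := by omega
          rw [hsub1]
          have e3 : x * (d ^ ν - δ) = x * d ^ ν - x * δ :=
            Nat.mul_sub_left_distrib x (d ^ ν) δ
          have e4 : (d ^ j - x) * d ^ ν = d ^ j * d ^ ν - x * d ^ ν :=
            Nat.mul_sub_right_distrib (d ^ j) x (d ^ ν)
          have e5 : d ^ j * d ^ ν = d ^ k := by
            rw [← pow_add]
            congr 1
            omega
          have h6 : x * δ ≤ x * d ^ ν := Nat.mul_le_mul_left x hδd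
          have h7 : x * d ^ ν ≤ d ^ j * d ^ ν := Nat.mul_le_mul_right _ hxd
          rw [e3, e4, ← e5]
          set A := x * d ^ ν with hA'
          set B := x * δ with hB'
          set Cc := d ^ j * d ^ ν with hC'
          omega
  constructor
  · intro i hi
    have hk1 : 1 ≤ i * ν := Nat.mul_pos (by omega) hν0
    obtain ⟨ha, hb⟩ := key (i * ν) hk1
    refine ⟨ha, ?_⟩
    rw [if_pos (dvd_mul_left ν i), Nat.mul_div_cancel i hν0] at hb
    exact hb
  · intro k hk hnd
    obtain ⟨ha, hb⟩ := key k (by omega)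
    rw [if_neg hnd] at hb
    exact ⟨ha, by rw [hb, Nat.sub_zero]⟩
end

section
/- Let 𝔽 be a field of characteristic p > 0 and let f ∈ 𝔽[X] be a polynomial of degree ≥ 2 that is neither a monomial aX^d nor a binomial of the form aX^{p^ℓ} + b with a ≠ 0. Then no iterate f^(k) (k ≥ 1) is a monomial. -/
open Polynomial

private lemma helper_eq_pow {K : Type*} [Field K] [IsAlgClosed K] (q : K[X]) (α : K)
    (h : ∀ x, q.IsRoot x → x = α) :
    q = C q.leadingCoeff * (X - C α) ^ q.natDegree := by
  rcases eq_or_ne q 0 with rfl | hq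
  · simp
  · have hs : Splits q := IsAlgClosed.splits q
    have hcard : Multiset.card q.roots = q.natDegree := splits_iff_card_roots.mp hs
    have hroots : q.roots = Multiset.replicate q.natDegree α := by
      rw [Multiset.eq_replicate]
      exact ⟨hcard, fun b hb => h b (isRoot_of_mem_roots hb)⟩
    have hprod := hs.eq_prod_roots
    rw [hroots, Multiset.map_replicate, Multiset.prod_replicate] at hprod
    exact hprod

private lemma helper_dvd {K : Type*} [Field K] [IsAlgClosed K] (q : K[X]) {m : ℕ} (hm : 1 ≤ m)
    (h : q ∣ X ^ m) : q = C q.leadingCoeff * X ^ q.natDegree := by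
  have := helper_eq_pow q 0 (fun x hx => ?_)
  · simpa using this
  · obtain ⟨r, hr⟩ := h
    have hx0 : q.eval x = 0 := hx
    have h2 : x ^ m = 0 := by
      have := congrArg (Polynomial.eval x) hr
      simpa [hx0] using this
    exact pow_eq_zero_iff (by omega) |>.mp h2

private lemma lc_sub_C {F : Type*} [Field F] (f : Polynomial F) (c : F)
    (hf : 1 ≤ f.natDegree) : (f - C c).leadingCoeff = f.leadingCoeff := by
  rw [leadingCoeff, leadingCoeff, natDegree_sub_C, coeff_sub, coeff_C,
    if_neg (by omega), sub_zero]

private lemma lemA {K : Type*} [Field K] [IsAlgClosed K] (f g : K[X])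
    (hf : 1 ≤ f.natDegree) (hg : 1 ≤ g.natDegree) {a : K} {m : ℕ} (ha : a ≠ 0) (hm : 1 ≤ m)
    (h : f.comp g = C a * X ^ m) :
    f = C f.leadingCoeff * (X - C (g.coeff 0)) ^ f.natDegree ∧
      g = C g.leadingCoeff * X ^ g.natDegree + C (g.coeff 0) := by
  have key : ∀ α : K, f.IsRoot α →
      g - C α = C g.leadingCoeff * X ^ g.natDegree ∧ α = g.coeff 0 := by
    intro α hα
    have hdvd : (g - C α) ∣ C a * X ^ m := by
      obtain ⟨r, hr⟩ := (dvd_iff_isRoot).mpr hα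
      refine ⟨r.comp g, ?_⟩
      rw [← h, hr]
      simp [mul_comp, sub_comp]
    have hdvd2 : (g - C α) ∣ X ^ m := ((isUnit_C.mpr ha.isUnit).dvd_mul_left).mp hdvd
    have hres := helper_dvd (g - C α) hm hdvd2
    rw [lc_sub_C g α hg, natDegree_sub_C] at hres
    refine ⟨hres, ?_⟩
    have := congrArg (fun q : K[X] => q.coeff 0) hres
    simp only [coeff_sub, coeff_C, if_pos rfl, if_true, coeff_C_mul, coeff_X_pow,
      if_neg (by omega : ¬ (0 : ℕ) = g.natDegree), mul_zero] at this
    exact (sub_eq_zero.mp this).symm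
  have hdeg : f.degree ≠ 0 := by
    have := natDegree_pos_iff_degree_pos.mp (by omega : 0 < f.natDegree)
    exact this.ne'
  obtain ⟨α, hα⟩ := IsAlgClosed.exists_root f hdeg
  obtain ⟨hg1, hg2⟩ := key α hα
  constructor
  · exact helper_eq_pow f (g.coeff 0) (fun x hx => (key x hx).2)
  · rw [← hg2, ← hg1]; ring

private lemma lemA' {F : Type*} [Field F] (f g : Polynomial F)
    (hf : 1 ≤ f.natDegree) (hg : 1 ≤ g.natDegree) {a : F} {m : ℕ} (ha : a ≠ 0) (hm : 1 ≤ m)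
    (h : f.comp g = C a * X ^ m) :
    f = C f.leadingCoeff * (X - C (g.coeff 0)) ^ f.natDegree ∧
      g = C g.leadingCoeff * X ^ g.natDegree + C (g.coeff 0) := by
  let K := AlgebraicClosure F
  let φ : F →+* K := algebraMap F K
  have hmapinj : Function.Injective (Polynomial.map φ) := map_injective φ φ.injective
  have hK : (f.map φ).comp (g.map φ) = C (φ a) * X ^ m := by
    rw [← map_comp, h]
    simp [Polynomial.map_mul, Polynomial.map_pow]
  have hres := lemA (f.map φ) (g.map φ) (by rwa [natDegree_map]) (by rwa [natDegree_map])
    (fun hc => ha (φ.injective (by simpa using hc))) hm hK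
  obtain ⟨h1, h2⟩ := hres
  constructor
  · apply hmapinj
    rw [h1, natDegree_map, leadingCoeff_map, coeff_map]
    simp [Polynomial.map_mul, Polynomial.map_pow, Polynomial.map_sub]
  · apply hmapinj
    rw [h2, natDegree_map, leadingCoeff_map, coeff_map]
    simp [Polynomial.map_mul, Polynomial.map_pow, Polynomial.map_add]

/-- Iterates of a polynomial: `piter f 0 = X`, `piter f (k+1) = f ∘ (piter f k)`. -/
noncomputable def piter {F : Type*} [Field F] (f : Polynomial F) (k : ℕ) : Polynomial F :=
  (fun p => f.comp p)^[k] Polynomial.X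

private lemma piter_succ {F : Type*} [Field F] (f : Polynomial F) (k : ℕ) :
    piter f (k + 1) = f.comp (piter f k) :=
  Function.iterate_succ_apply' _ _ _

theorem stmt7 {F : Type*} [Field F] (p : ℕ) [Fact p.Prime] [CharP F p]
    (f : Polynomial F) (hd : 2 ≤ f.natDegree)
    (hmon : ¬ ∃ (a : F) (m : ℕ), f = C a * X ^ m)
    (hbin : ¬ ∃ (a b : F) (ℓ : ℕ), a ≠ 0 ∧ f = C a * X ^ (p ^ ℓ) + C b) :
    ∀ k : ℕ, 1 ≤ k → ¬ ∃ (a : F) (m : ℕ), piter f k = C a * X ^ m := by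
  rintro k hk ⟨a, m, hEq⟩
  have hp : Fact p.Prime := inferInstance
  have hfne : f ≠ 0 := fun h0 => by rw [h0, natDegree_zero] at hd; omega
  have hlc : f.leadingCoeff ≠ 0 := leadingCoeff_ne_zero.mpr hfne
  set n := f.natDegree with hn
  have hdeg : ∀ j, (piter f j).natDegree = n ^ j := by
    intro j; induction j with
    | zero => simp [piter]
    | succ j ih => rw [piter_succ, natDegree_comp, ih, pow_succ, mul_comm]
  have hane : a ≠ 0 := by
    rintro rfl
    rw [map_zero, zero_mul] at hEq
    have h1 := hdeg k
    rw [hEq, natDegree_zero] at h1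
    have : n = 0 := by
      rcases Nat.pow_eq_zero.mp h1.symm with ⟨h, _⟩
      exact h
    omega
  have hm : m = n ^ k := by rw [← hdeg k, hEq, natDegree_C_mul_X_pow m a hane]
  have hm1 : 1 ≤ m := by
    rw [hm]
    exact Nat.one_le_pow _ _ (by omega)
  obtain ⟨k, rfl⟩ : ∃ j, k = j + 1 := ⟨k - 1, by omega⟩
  cases k with
  | zero =>
    apply hmon
    refine ⟨a, m, ?_⟩
    rw [← hEq]
    simp [piter]
  | succ j =>
    set g := piter f (j + 1) with hgdef
    set h := piter f j with hhdef
    have hfg : f.comp g = C a * X ^ m := by rw [← piter_succ]; exact hEq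
    have hfh : f.comp h = g := (piter_succ f j).symm
    have hf1 : 1 ≤ f.natDegree := by omega
    have hg1 : 1 ≤ g.natDegree := by rw [hgdef, hdeg]; exact Nat.one_le_pow _ _ (by omega)
    have hh1 : 1 ≤ h.natDegree := by rw [hhdef, hdeg]; exact Nat.one_le_pow _ _ (by omega)
    obtain ⟨E1, E2g⟩ := lemA' f g hf1 hg1 hane hm1 hfg
    set α := g.coeff 0 with hαdef
    have hglc : g.leadingCoeff ≠ 0 := by
      rw [leadingCoeff_ne_zero]
      intro h0
      rw [h0] at hg1
      simp at hg1
    have hsub : (f - C α).comp h = C g.leadingCoeff * X ^ g.natDegree := by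
      rw [sub_comp, C_comp, hfh]
      conv_lhs => rw [E2g]
      ring
    obtain ⟨E2, -⟩ := lemA' (f - C α) h (by rw [natDegree_sub_C]; omega) hh1 hglc hg1 hsub
    rw [natDegree_sub_C, lc_sub_C f α hf1] at E2
    set γ := h.coeff 0 with hγdef
    set lc := f.leadingCoeff with hlcdef
    have Ecomb : C lc * (X - C α) ^ n = C lc * (X - C γ) ^ n + C α := by
      rw [← E1, ← E2]; ring
    have Ediv : (X - C α) ^ n = (X - C γ) ^ n + C (lc⁻¹ * α) := by
      apply mul_left_cancel₀ (show (C lc : Polynomial F) ≠ 0 from fun hc => hlc (by simpa using hc))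
      rw [mul_add, ← C_mul, mul_inv_cancel_left₀ hlc]
      exact Ecomb
    set ℓ := n.factorization p with hℓdef
    set t := n / p ^ ℓ with htdef
    have hnt : p ^ ℓ * t = n := Nat.ordProj_mul_ordCompl_eq_self n p
    have hpt : ¬ p ∣ t := Nat.not_dvd_ordCompl hp.out (by omega)
    have ht0 : t ≠ 0 := by intro h0; rw [h0, mul_zero] at hnt; omega
    have hq1 : 1 ≤ p ^ ℓ := Nat.one_le_pow _ _ hp.out.pos
    have hfrob : ∀ c : F, (X - C c) ^ n = (X ^ (p ^ ℓ) - C (c ^ (p ^ ℓ))) ^ t := by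
      intro c
      rw [← hnt, pow_mul, sub_pow_char_pow, map_pow]
    rw [hfrob α, hfrob γ] at Ediv
    set β := α ^ (p ^ ℓ) with hβdef
    set δ := γ ^ (p ^ ℓ) with hδdef
    set e := lc⁻¹ * α with hedef
    have hcompeq : ((X - C β) ^ t - (X - C δ) ^ t - C e).comp (X ^ (p ^ ℓ)) = 0 := by
      simp only [sub_comp, pow_comp, X_comp, C_comp]
      rw [Ediv]; ring
    have hP : (X - C β) ^ t - (X - C δ) ^ t - C e = 0 := by
      rcases comp_eq_zero_iff.mp hcompeq with h0 | ⟨-, h2⟩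
      · exact h0
      · exfalso
        have hc0 : ((X : Polynomial F) ^ (p ^ ℓ)).coeff 0 = 0 := by
          rw [coeff_X_pow]
          simp only [if_neg (by omega : ¬ (0 : ℕ) = p ^ ℓ)]
        rw [hc0, map_zero] at h2
        exact pow_ne_zero _ X_ne_zero h2
    have hP' : (X - C β) ^ t = (X - C δ) ^ t + C e := by
      linear_combination hP
    rcases eq_or_ne t 1 with ht1 | ht1
    · apply hbin
      refine ⟨lc, -(lc * β), ℓ, hlc, ?_⟩
      rw [E1, hfrob α, ← hβdef, ht1, pow_one, map_neg, map_mul]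
      ring
    · have ht2 : t - 1 ≠ 0 := by
        rcases t with _ | _ | t
        · exact absurd rfl ht0
        · exact absurd rfl ht1
        · simp
      have htF : (t : F) ≠ 0 := fun hc => hpt ((CharP.cast_eq_zero_iff F p t).mp hc)
      have hder := congrArg derivative hP'
      simp only [derivative_add, derivative_C, add_zero, derivative_pow, derivative_sub,
        derivative_X, sub_zero, mul_one] at hder
      have hev := congrArg (eval β) hder
      simp only [eval_mul, eval_pow, eval_sub, eval_X, eval_C, sub_self,
        zero_pow ht2, mul_zero] at hev
      have hβδ : β = δ := by
        have h1 := (mul_eq_zero.mp hev.symm).resolve_left htF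
        have h2 := pow_eq_zero_iff ht2 |>.mp h1
        exact sub_eq_zero.mp h2
      rw [hβδ] at hP'
      have hCe : C e = 0 := by linear_combination -hP'
      have he0 : lc⁻¹ * α = 0 := by rw [← hedef]; exact C_eq_zero.mp hCe
      have hα0 : α = 0 := by
        rcases mul_eq_zero.mp he0 with h0 | h0
        · exact absurd h0 (inv_ne_zero hlc)
        · exact h0
      apply hmon
      exact ⟨lc, n, by rw [E1, hα0, map_zero, sub_zero]⟩
end
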